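/- For every real M > 1, the two-dimensional Lebesgue measure of the set { (x, y) ∈ (0,1) × (0,1) : y(1 − y) / (x + y − 2xy − 1)² > M } equals (1/2)·ln((M − 1)/(M + 1)) + (1/(2√M))·ln((√M + 1)/(√M − 1)). -/

import Mathlib

/-!
For fixed `y`, the quantity `x + y - 2xy - 1 = -(x(2y - 1) + (1 - y))` is affine and negative in
`x ∈ (0, 1)`, so every horizontal slice of the region is an interval. The region is invariant
under the point reflection `(x, y) ↦ (1 - x, 1 - y)` and misses the line `y = 1/2`, so its area is
twice the area of its upper half. There the slice at height `y` is `(0, ℓ(y))` with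
`ℓ(y) = (√(y(1 - y)/M) - (1 - y)) / (2y - 1)`, which is positive exactly when `y > M/(M + 1)`;
integrating `ℓ` over `(M/(M + 1), 1)` with an explicit antiderivative gives the formula.
-/

open Set MeasureTheory Real

namespace BradleyTerry

noncomputable def sensitiveRegion (M : ℝ) : Set (ℝ × ℝ) :=
  {p | p.1 ∈ Ioo 0 1 ∧ p.2 ∈ Ioo 0 1 ∧
    p.2 * (1 - p.2) / (p.1 + p.2 - 2 * p.1 * p.2 - 1) ^ 2 > M}

noncomputable def sliceEnd (M y : ℝ) : ℝ :=
  (√(y * (1 - y) / M) - (1 - y)) / (2 * y - 1)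

variable {M : ℝ}

lemma measurableSet_sensitiveRegion (M : ℝ) : MeasurableSet (sensitiveRegion M) :=
  (measurable_fst measurableSet_Ioo).inter
    ((measurable_snd measurableSet_Ioo).inter (measurableSet_lt measurable_const (by fun_prop :
      Measurable fun p : ℝ × ℝ => p.2 * (1 - p.2) / (p.1 + p.2 - 2 * p.1 * p.2 - 1) ^ 2)))

lemma reflect_mem_sensitiveRegion {p : ℝ × ℝ} :
    (1 - p.1, 1 - p.2) ∈ sensitiveRegion M ↔ p ∈ sensitiveRegion M := by
  obtain ⟨x, y⟩ := p
  simp only [sensitiveRegion, mem_ofPred_eq, mem_Ioo]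
  rw [show (1 - y) * (1 - (1 - y)) = y * (1 - y) by ring,
    show 1 - x + (1 - y) - 2 * (1 - x) * (1 - y) - 1 = x + y - 2 * x * y - 1 by ring]
  constructor <;> rintro ⟨⟨_, _⟩, ⟨_, _⟩, h⟩ <;>
    exact ⟨⟨by linarith, by linarith⟩, ⟨by linarith, by linarith⟩, h⟩

lemma snd_ne_half_of_mem_sensitiveRegion (hM : 1 < M) {p : ℝ × ℝ}
    (hp : p ∈ sensitiveRegion M) : p.2 ≠ 1 / 2 := by
  rintro hy
  have h := hp.2.2
  rw [hy, show (p.1 + 1 / 2 - 2 * p.1 * (1 / 2) - 1) ^ 2 = (1 / 2) * (1 - 1 / 2) by ring,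
    div_self (by norm_num)] at h
  exact h.not_gt hM

lemma volume_sensitiveRegion_eq_two_mul (hM : 1 < M) :
    volume (sensitiveRegion M) = 2 * volume (sensitiveRegion M ∩ {p | 1 / 2 < p.2}) := by
  set U := sensitiveRegion M ∩ {p | 1 / 2 < p.2}
  have hU : MeasurableSet U :=
    (measurableSet_sensitiveRegion M).inter (measurableSet_lt measurable_const measurable_snd)
  have hsplit : sensitiveRegion M = U ∪ Prod.map (1 - ·) (1 - ·) ⁻¹' U := by
    ext p
    simp only [U, mem_union, mem_inter_iff, mem_preimage, Prod.map, mem_ofPred_eq]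
    rw [reflect_mem_sensitiveRegion]
    constructor
    · intro hp
      rcases (snd_ne_half_of_mem_sensitiveRegion hM hp).lt_or_gt with h | h
      · exact .inr ⟨hp, by linarith⟩
      · exact .inl ⟨hp, h⟩
    · rintro (⟨hp, -⟩ | ⟨hp, -⟩) <;> exact hp
  have hdisj : Disjoint U (Prod.map (1 - ·) (1 - ·) ⁻¹' U) := by
    rw [disjoint_left]
    rintro p ⟨-, hp⟩ ⟨-, hp'⟩
    simp only [Prod.map, mem_ofPred_eq] at hp hp'
    linarith
  have hreflect : MeasurePreserving (Prod.map (fun x : ℝ => 1 - x) (fun y : ℝ => 1 - y)) :=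
    (volume.measurePreserving_sub_left 1).prod (volume.measurePreserving_sub_left 1)
  rw [hsplit, measure_union hdisj (hU.preimage hreflect.measurable),
    hreflect.measure_preimage hU.nullMeasurableSet, two_mul]

lemma lt_div_sq_iff_neg_lt_sqrt {a d : ℝ} (hM : 0 < M) (hd : d < 0) :
    M < a / d ^ 2 ↔ -d < √(a / M) := by
  rw [Real.lt_sqrt (by linarith), neg_sq, lt_div_iff₀ hM, lt_div_iff₀ (sq_pos_of_neg hd),
    mul_comm]

lemma div_add_one_mem_Ioo (hM : 1 < M) : M / (M + 1) ∈ Ioo (1 / 2) 1 := by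
  constructor
  · rw [lt_div_iff₀ (by linarith)]; linarith
  · rw [div_lt_one (by linarith)]; linarith

lemma slice_sensitiveRegion (hM : 1 < M) {y : ℝ} (hy : y ∈ Ioo (1 / 2) 1) :
    {x | (x, y) ∈ sensitiveRegion M} = Ioo 0 (sliceEnd M y) := by
  obtain ⟨hy₁, hy₂⟩ := hy
  have hden : 0 < 2 * y - 1 := by linarith
  have hsqrt_lt : √(y * (1 - y) / M) < y := by
    rw [Real.sqrt_lt' (by linarith), div_lt_iff₀ (by linarith)]
    nlinarith
  have hend_lt_one : sliceEnd M y < 1 := by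
    rw [sliceEnd, div_lt_one hden]; linarith
  have hcond : ∀ x, 0 < x →
      (M < y * (1 - y) / (x + y - 2 * x * y - 1) ^ 2 ↔ x < sliceEnd M y) := by
    intro x hx
    rw [lt_div_sq_iff_neg_lt_sqrt (by linarith) (by nlinarith), sliceEnd, lt_div_iff₀ hden]
    constructor <;> intro <;> linarith
  ext x
  simp only [sensitiveRegion, mem_ofPred_eq, mem_Ioo]
  constructor
  · rintro ⟨⟨hx, -⟩, -, h⟩
    exact ⟨hx, (hcond x hx).1 h⟩
  · rintro ⟨hx, h⟩
    exact ⟨⟨hx, h.trans hend_lt_one⟩, ⟨by linarith, hy₂⟩, (hcond x hx).2 h⟩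

lemma volume_sensitiveRegion_inter_upper (hM : 1 < M) :
    volume (sensitiveRegion M ∩ {p | 1 / 2 < p.2}) =
      ∫⁻ y in Ioo (1 / 2) 1, ENNReal.ofReal (sliceEnd M y) := by
  rw [Measure.volume_eq_prod, Measure.prod_apply_symm ((measurableSet_sensitiveRegion M).inter
    (measurableSet_lt measurable_const measurable_snd)), ← lintegral_indicator measurableSet_Ioo]
  refine lintegral_congr fun y => ?_
  by_cases hy : y ∈ Ioo (1 / 2) 1
  · have hslice : (fun x => (x, y)) ⁻¹' (sensitiveRegion M ∩ {p | 1 / 2 < p.2}) =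
        {x | (x, y) ∈ sensitiveRegion M} := by
      ext x
      simp only [mem_preimage, mem_inter_iff, mem_ofPred_eq, hy.1, and_true]
    rw [indicator_of_mem hy, hslice, slice_sensitiveRegion hM hy, Real.volume_Ioo, sub_zero]
  · have hslice : (fun x => (x, y)) ⁻¹' (sensitiveRegion M ∩ {p | 1 / 2 < p.2}) = ∅ := by
      ext x
      simp only [mem_preimage, mem_inter_iff, mem_ofPred_eq, mem_empty_iff_false, iff_false]
      exact fun ⟨hp, hy'⟩ => hy ⟨hy', hp.2.1.2⟩
    rw [indicator_of_notMem hy, hslice, measure_empty]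

lemma sliceEnd_pos_iff (hM : 1 < M) {y : ℝ} (hy : y ∈ Ioo (1 / 2) 1) :
    0 < sliceEnd M y ↔ M / (M + 1) < y := by
  obtain ⟨hy₁, hy₂⟩ := hy
  rw [sliceEnd, div_pos_iff_of_pos_right (by linarith), sub_pos, Real.lt_sqrt (by linarith),
    lt_div_iff₀ (by linarith), div_lt_iff₀ (by linarith)]
  constructor <;> intro <;> nlinarith

lemma continuousOn_sliceEnd (M : ℝ) : ContinuousOn (sliceEnd M) (Ioi (1 / 2)) :=
  ContinuousOn.div (by fun_prop) (by fun_prop) fun y (hy : 1 / 2 < y) => by linarith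

lemma lintegral_ofReal_sliceEnd (hM : 1 < M) :
    ∫⁻ y in Ioo (1 / 2) 1, ENNReal.ofReal (sliceEnd M y) =
      ENNReal.ofReal (∫ y in M / (M + 1)..1, sliceEnd M y) := by
  obtain ⟨hy₀, hy₀'⟩ := div_add_one_mem_Ioo hM
  have hzero : ∫⁻ y in Ioc (1 / 2) (M / (M + 1)), ENNReal.ofReal (sliceEnd M y) = 0 := by
    refine setLIntegral_eq_zero measurableSet_Ioc fun y hy => ENNReal.ofReal_eq_zero.2 ?_
    exact not_lt.1 fun h => hy.2.not_gt ((sliceEnd_pos_iff hM ⟨hy.1, hy.2.trans_lt hy₀'⟩).1 h)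
  have hnonneg : 0 ≤ᵐ[volume.restrict (Ioo (M / (M + 1)) 1)] sliceEnd M :=
    (ae_restrict_iff' measurableSet_Ioo).2 <| ae_of_all _ fun y hy =>
      ((sliceEnd_pos_iff hM ⟨hy₀.trans hy.1, hy.2⟩).2 hy.1).le
  have hint : IntegrableOn (sliceEnd M) (Ioo (M / (M + 1)) 1) :=
    ((continuousOn_sliceEnd M).mono fun y hy => hy₀.trans_le hy.1).integrableOn_Icc.mono_set
      Ioo_subset_Icc_self
  rw [← Ioc_union_Ioo_eq_Ioo hy₀.le hy₀',
    lintegral_union measurableSet_Ioo (Ioc_disjoint_Ioi_same.mono_right Ioo_subset_Ioi_self),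
    hzero, zero_add, ← ofReal_integral_eq_lintegral_ofReal hint hnonneg,
    intervalIntegral.integral_of_le hy₀'.le, integral_Ioc_eq_integral_Ioo]

noncomputable def sqrtQuotPrimitive (y : ℝ) : ℝ :=
  (2 * √(y * (1 - y)) - log (1 + 2 * √(y * (1 - y))) + log (2 * y - 1)) / 4

noncomputable def linQuotPrimitive (y : ℝ) : ℝ :=
  y / 2 - log (2 * y - 1) / 4

lemma hasDerivAt_sqrtQuotPrimitive {y : ℝ} (hy : y ∈ Ioo (1 / 2) 1) :
    HasDerivAt sqrtQuotPrimitive (√(y * (1 - y)) / (2 * y - 1)) y := by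
  obtain ⟨hy₁, hy₂⟩ := hy
  set s := √(y * (1 - y))
  have hs_pos : 0 < s := Real.sqrt_pos.2 (by nlinarith)
  have hs_sq : s ^ 2 = y * (1 - y) := Real.sq_sqrt (by nlinarith)
  have hden : 2 * y - 1 ≠ 0 := by linarith
  have hsqrt : HasDerivAt (fun y => √(y * (1 - y))) ((1 - 2 * y) / (2 * s)) y := by
    have hpoly : HasDerivAt (fun y => y * (1 - y)) (1 - 2 * y) y :=
      ((hasDerivAt_id' y).mul ((hasDerivAt_id' y).const_sub 1)).congr_deriv (by ring)
    exact hpoly.sqrt (by nlinarith)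
  have hlog_sqrt : HasDerivAt (fun y => log (1 + 2 * √(y * (1 - y))))
      (2 * ((1 - 2 * y) / (2 * s)) / (1 + 2 * s)) y :=
    ((hsqrt.const_mul 2).const_add 1).log (by positivity)
  have hlog_lin : HasDerivAt (fun y => log (2 * y - 1)) (2 / (2 * y - 1)) y := by
    simpa using (((hasDerivAt_id y).const_mul 2).sub_const 1).log hden
  refine ((((hsqrt.const_mul 2).sub hlog_sqrt).add hlog_lin).div_const 4).congr_deriv ?_
  field_simp
  linear_combination (-8 * s) * hs_sq

lemma hasDerivAt_linQuotPrimitive {y : ℝ} (hy : 1 / 2 < y) :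
    HasDerivAt linQuotPrimitive ((y - 1) / (2 * y - 1)) y := by
  have hden : 2 * y - 1 ≠ 0 := by linarith
  have hlog_lin : HasDerivAt (fun y => log (2 * y - 1)) (2 / (2 * y - 1)) y := by
    simpa using (((hasDerivAt_id y).const_mul 2).sub_const 1).log hden
  refine (((hasDerivAt_id' y).div_const 2).sub (hlog_lin.div_const 4)).congr_deriv ?_
  field_simp
  ring

lemma two_mul_div_add_one_sub_one (hM : M + 1 ≠ 0) :
    2 * (M / (M + 1)) - 1 = (M - 1) / (M + 1) := by
  field_simp
  ring

lemma integral_sliceEnd (hM : 1 < M) :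
    ∫ y in M / (M + 1)..1, sliceEnd M y =
      (sqrtQuotPrimitive 1 - sqrtQuotPrimitive (M / (M + 1))) / √M +
        (linQuotPrimitive 1 - linQuotPrimitive (M / (M + 1))) := by
  obtain ⟨hy₀, hy₀'⟩ := div_add_one_mem_Ioo hM
  have hsub : Icc (M / (M + 1)) 1 ⊆ Ioi (1 / 2) := fun y hy => hy₀.trans_le hy.1
  have hcont : ContinuousOn (fun y => sqrtQuotPrimitive y / √M + linQuotPrimitive y)
      (Icc (M / (M + 1)) 1) := by
    have hlog_arg₁ : ∀ y ∈ Icc (M / (M + 1)) 1, 1 + 2 * √(y * (1 - y)) ≠ 0 :=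
      fun y _ => by positivity
    have hlog_arg₂ : ∀ y ∈ Icc (M / (M + 1)) 1, 2 * y - 1 ≠ 0 := fun y hy => by
      have : 1 / 2 < y := hsub hy
      linarith
    unfold sqrtQuotPrimitive linQuotPrimitive
    fun_prop (disch := assumption)
  have hderiv : ∀ y ∈ Ioo (M / (M + 1)) 1,
      HasDerivAt (fun y => sqrtQuotPrimitive y / √M + linQuotPrimitive y) (sliceEnd M y) y := by
    intro y hy
    refine (((hasDerivAt_sqrtQuotPrimitive ⟨hy₀.trans hy.1, hy.2⟩).div_const √M).add
      (hasDerivAt_linQuotPrimitive (hy₀.trans hy.1))).congr_deriv ?_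
    rw [sliceEnd, sqrt_div' _ (by linarith)]
    ring
  rw [intervalIntegral.integral_eq_sub_of_hasDerivAt_of_le hy₀'.le hcont hderiv
    (((continuousOn_sliceEnd M).mono hsub).intervalIntegrable_of_Icc hy₀'.le)]
  ring

lemma sqrtQuotPrimitive_one : sqrtQuotPrimitive 1 = 0 := by
  norm_num [sqrtQuotPrimitive]

lemma linQuotPrimitive_one : linQuotPrimitive 1 = 1 / 2 := by
  norm_num [linQuotPrimitive]

lemma sqrtQuotPrimitive_div_add_one (hM : 1 < M) :
    sqrtQuotPrimitive (M / (M + 1)) = (2 * √M / (M + 1) - log ((√M + 1) / (√M - 1))) / 4 := by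
  have hM₁ : 0 < M + 1 := by linarith
  have hr₁ : 1 < √M := by simpa using Real.sqrt_lt_sqrt zero_le_one hM
  have hr₂ : √M ^ 2 = M := Real.sq_sqrt (by linarith)
  have hthr : 0 < (M - 1) / (M + 1) := div_pos (by linarith) hM₁
  have hs : √(M / (M + 1) * (1 - M / (M + 1))) = √M / (M + 1) := by
    rw [show M / (M + 1) * (1 - M / (M + 1)) = (√M / (M + 1)) ^ 2 by field_simp; rw [hr₂]; ring,
      Real.sqrt_sq (by positivity)]
  have hq : (1 + 2 * (√M / (M + 1))) / (2 * (M / (M + 1)) - 1) = (√M + 1) / (√M - 1) := by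
    rw [two_mul_div_add_one_sub_one hM₁.ne', div_eq_div_iff hthr.ne' (by linarith)]
    field_simp
    linear_combination 2 * hr₂
  rw [sqrtQuotPrimitive, hs, ← hq,
    log_div (by positivity) (by rw [two_mul_div_add_one_sub_one hM₁.ne']; exact hthr.ne')]
  ring

lemma linQuotPrimitive_div_add_one (hM : 1 < M) :
    linQuotPrimitive (M / (M + 1)) = M / (M + 1) / 2 - log ((M - 1) / (M + 1)) / 4 := by
  rw [linQuotPrimitive, two_mul_div_add_one_sub_one (by linarith)]

end BradleyTerry

open BradleyTerry

theorem stmt_9 (M : ℝ) (hM : 1 < M) :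
    volume {p : ℝ × ℝ | p.1 ∈ Ioo (0 : ℝ) 1 ∧ p.2 ∈ Ioo (0 : ℝ) 1 ∧
        p.2 * (1 - p.2) / (p.1 + p.2 - 2 * p.1 * p.2 - 1) ^ 2 > M} =
      ENNReal.ofReal
        (1 / 2 * Real.log ((M - 1) / (M + 1)) +
          1 / (2 * Real.sqrt M) * Real.log ((Real.sqrt M + 1) / (Real.sqrt M - 1))) := by
  have hr : 0 < √M := Real.sqrt_pos.2 (by linarith)
  change volume (sensitiveRegion M) = _
  rw [volume_sensitiveRegion_eq_two_mul hM, volume_sensitiveRegion_inter_upper hM,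
    lintegral_ofReal_sliceEnd hM, integral_sliceEnd hM, sqrtQuotPrimitive_one,
    linQuotPrimitive_one, sqrtQuotPrimitive_div_add_one hM, linQuotPrimitive_div_add_one hM,
    ← ENNReal.ofReal_ofNat 2, ← ENNReal.ofReal_mul zero_le_two]
  congr 1
  field_simp
  ring
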